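/- Let π be a set of primes, G a finite group possessing a π-Hall subgroup, A ⊴ G, and H a π-Hall subgroup of A with G = A * N_G(H). Then N_G(H) possesses a π-Hall subgroup, and every π-Hall subgroup of N_G(H) is a π-Hall subgroup of G. -/

import Mathlib

/-!
By the Frattini factorisation `G = A N` with `N = N_G(H)`, `|G : N| = |A : A ∩ N|` divides
`|A : H|`, so `N` has π'-index; this already makes every π-Hall subgroup of `N` one of `G`.
For existence take a π-Hall subgroup `K` of `G` and `M = N ∩ KA`. As `G = N (KA)`, the index
`|G : M| = |G : N| |G : KA|` is a π'-number, and `|M : A ∩ M|` divides `|KA : A|`, a divisor of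
`|K|`. In `M / H` the normal π'-subgroup `(A ∩ M) / H` has π-index, so by Schur–Zassenhaus it
has a complement, whose preimage in `M` is a π-Hall subgroup of `M`, hence of `G` and of `N`.
-/

def IsPiNumber (π : Set ℕ) (n : ℕ) : Prop := ∀ p : ℕ, p.Prime → p ∣ n → p ∈ π

def IsHallSubgroup {G : Type*} [Group G] (π : Set ℕ) (H : Subgroup G) : Prop :=
  IsPiNumber π (Nat.card H) ∧ ∀ p : ℕ, p.Prime → p ∣ H.index → p ∉ π

open Subgroup

namespace IsPiNumber

variable {π : Set ℕ} {m n : ℕ}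

theorem of_dvd (hn : IsPiNumber π n) (h : m ∣ n) : IsPiNumber π m :=
  fun p hp hpm => hn p hp (hpm.trans h)

theorem mul (hm : IsPiNumber π m) (hn : IsPiNumber π n) : IsPiNumber π (m * n) :=
  fun p hp hpd => ((Nat.Prime.dvd_mul hp).mp hpd).elim (hm p hp) (hn p hp)

theorem coprime (hm : IsPiNumber π m) (hn : IsPiNumber πᶜ n) : m.Coprime n :=
  Nat.Coprime.symm <| Nat.coprime_of_dvd fun p hp hpn hpm => hn p hp hpn (hm p hp hpm)

end IsPiNumber

namespace Subgroup

variable {G : Type*} [Group G]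

theorem relIndex_eq_index_of_forall_eq_mul {C D : Subgroup G}
    (h : ∀ g : G, ∃ c ∈ C, ∃ d ∈ D, g = c * d) : D.relIndex C = D.index := by
  rw [← relIndex_top_right]
  refine Nat.card_eq_of_bijective (quotientSubgroupOfEmbeddingOfLE D le_top)
    ⟨(quotientSubgroupOfEmbeddingOfLE D le_top).injective, fun x => ?_⟩
  induction x using QuotientGroup.induction_on with
  | H g =>
    obtain ⟨c, hc, d, hd, hg⟩ := h g
    refine ⟨QuotientGroup.mk ⟨c, hc⟩, QuotientGroup.eq.mpr ?_⟩
    simpa [mem_subgroupOf, hg] using hd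

theorem relIndex_dvd_relIndex_of_le {A M S : Subgroup G} [A.Normal] (h : M ≤ S) :
    A.relIndex M ∣ A.relIndex S := by
  simp only [← QuotientGroup.ker_mk' A, relIndex_ker]
  exact card_dvd_of_le (map_mono h)

end Subgroup

namespace IsHallSubgroup

variable {G : Type*} [Group G] {π : Set ℕ} {Y M : Subgroup G}

theorem of_subgroupOf (hYM : Y ≤ M) (hY : IsHallSubgroup π (Y.subgroupOf M))
    (hM : IsPiNumber πᶜ M.index) : IsHallSubgroup π Y := by
  refine ⟨Nat.card_congr (subgroupOfEquivOfLe hYM).toEquiv ▸ hY.1, ?_⟩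
  rw [← relIndex_mul_index hYM]
  exact IsPiNumber.mul hY.2 hM

theorem subgroupOf (hYM : Y ≤ M) (hY : IsHallSubgroup π Y) :
    IsHallSubgroup π (Y.subgroupOf M) :=
  ⟨(Nat.card_congr (subgroupOfEquivOfLe hYM).toEquiv).symm ▸ hY.1,
    IsPiNumber.of_dvd hY.2 (relIndex_dvd_index_of_le hYM)⟩

end IsHallSubgroup

theorem exists_isHallSubgroup_of_normal {X : Type*} [Group X] [Finite X] {π : Set ℕ}
    {H B : Subgroup X} [H.Normal] [hB : B.Normal] (hHB : H ≤ B) (hH : IsPiNumber π (Nat.card H))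
    (hBH : IsPiNumber πᶜ (H.relIndex B)) (hXB : IsPiNumber π B.index) :
    ∃ Y : Subgroup X, IsHallSubgroup π Y := by
  let ψ := QuotientGroup.mk' H
  have hψ : Function.Surjective ψ := QuotientGroup.mk'_surjective H
  have hcard : Nat.card (B.map ψ) = H.relIndex B := by
    rw [← relIndex_ker, QuotientGroup.ker_mk']
  have hindex : (B.map ψ).index = B.index :=
    index_map_eq _ hψ (by rwa [QuotientGroup.ker_mk'])
  have : (B.map ψ).Normal := hB.map ψ hψ
  obtain ⟨C, hC⟩ := exists_right_complement'_of_coprime <| by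
    rw [hcard, hindex]; exact (hXB.coprime hBH).symm
  refine ⟨C.comap ψ, ?_, ?_⟩
  · have hker : ψ.ker = H := QuotientGroup.ker_mk' H
    have hHC : H ≤ C.comap ψ := hker.ge.trans (ker_le_comap ψ C)
    have hCH : H.relIndex (C.comap ψ) = Nat.card C := by
      have := relIndex_ker (K := C.comap ψ) ψ
      rwa [hker, map_comap_eq_self_of_surjective hψ] at this
    have hYcard : Nat.card (C.comap ψ) = Nat.card H * B.index := by
      rw [← relIndex_bot_left, ← relIndex_mul_relIndex ⊥ H _ bot_le hHC, relIndex_bot_left,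
        hCH, ← hC.symm.index_eq_card, hindex]
    rw [hYcard]; exact hH.mul hXB
  · rw [index_comap_of_surjective _ hψ, hC.index_eq_card, hcard]
    exact hBH

theorem exists_isHallSubgroup_subgroupOf {G : Type*} [Group G] [Finite G] {π : Set ℕ}
    {A H M : Subgroup G} [A.Normal] (hHA : H ≤ A) (hHM : H ≤ M)
    (hMH : M ≤ normalizer (H : Set G)) (hH : IsHallSubgroup π (H.subgroupOf A))
    (hAM : IsPiNumber π (A.relIndex M)) :
    ∃ Y ≤ M, IsHallSubgroup π (Y.subgroupOf M) := by
  have : (H.subgroupOf M).Normal := normal_subgroupOf_of_le_normalizer hMH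
  have hcard : Nat.card (H.subgroupOf M) = Nat.card (H.subgroupOf A) :=
    Nat.card_congr
      ((subgroupOfEquivOfLe hHM).toEquiv.trans (subgroupOfEquivOfLe hHA).toEquiv.symm)
  have hrel : (H.subgroupOf M).relIndex (A.subgroupOf M) ∣ H.relIndex A := by
    rw [← inf_subgroupOf_right A M, relIndex_subgroupOf inf_le_right]
    exact Dvd.intro _ (relIndex_mul_relIndex H _ A (le_inf hHA hHM) inf_le_left)
  obtain ⟨Y, hY⟩ := exists_isHallSubgroup_of_normal (subgroupOf_mono M hHA) (hcard ▸ hH.1)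
    (IsPiNumber.of_dvd hH.2 hrel) hAM
  refine ⟨Y.map M.subtype, map_subtype_le Y, ?_⟩
  rwa [subgroupOf, comap_map_eq_self_of_injective M.subtype_injective]

/-- If `G` has a `π`-Hall subgroup, `A ⊴ G`, and `H` is a `π`-Hall subgroup of `A`
with `G = A * N_G(H)`, then `N_G(H)` has a `π`-Hall subgroup and every `π`-Hall
subgroup of `N_G(H)` is a `π`-Hall subgroup of `G`. -/
theorem hall_of_normalizer {G : Type*} [Group G] [Finite G] (π : Set ℕ)
    (A H : Subgroup G) [A.Normal] (hG : ∃ K : Subgroup G, IsHallSubgroup π K)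
    (hHA : H ≤ A) (hH : IsHallSubgroup π (H.subgroupOf A))
    (hfrat : ∀ g : G, ∃ a ∈ A, ∃ m ∈ Subgroup.normalizer (H : Set G), g = a * m) :
    (∃ Y : Subgroup G, Y ≤ Subgroup.normalizer (H : Set G) ∧ IsHallSubgroup π (Y.subgroupOf (Subgroup.normalizer (H : Set G)))) ∧
      ∀ Y : Subgroup G, Y ≤ Subgroup.normalizer (H : Set G) → IsHallSubgroup π (Y.subgroupOf (Subgroup.normalizer (H : Set G))) →
        IsHallSubgroup π Y := by
  set N := normalizer (H : Set G)
  have hN : IsPiNumber πᶜ N.index := by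
    rw [← relIndex_eq_index_of_forall_eq_mul hfrat]
    exact IsPiNumber.of_dvd hH.2 (relIndex_dvd_of_le_left A le_normalizer)
  refine ⟨?_, fun Y hYN hY => hY.of_subgroupOf hYN hN⟩
  obtain ⟨K, hK⟩ := hG
  set S := K ⊔ A
  have hSN : S.relIndex N = S.index := relIndex_eq_index_of_forall_eq_mul fun g => by
    obtain ⟨a, ha, m, hm, hg⟩ := hfrat g⁻¹
    refine ⟨m⁻¹, inv_mem hm, a⁻¹, mem_sup_right (inv_mem ha), ?_⟩
    rw [← inv_inv g, hg, mul_inv_rev]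
  have hM : IsPiNumber πᶜ (N ⊓ S).index := by
    rw [← relIndex_mul_index inf_le_left, inf_relIndex_left, hSN]
    exact (IsPiNumber.of_dvd hK.2 (index_dvd_of_le le_sup_left)).mul hN
  have hAM : IsPiNumber π (A.relIndex (N ⊓ S)) := by
    refine hK.1.of_dvd ((relIndex_dvd_relIndex_of_le inf_le_right).trans ?_)
    rw [relIndex_sup_right]
    exact relIndex_dvd_card A K
  obtain ⟨Y, hYM, hY⟩ := exists_isHallSubgroup_subgroupOf hHA
    (le_inf le_normalizer (hHA.trans le_sup_right)) inf_le_left hH hAM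
  have hYN : Y ≤ N := hYM.trans inf_le_left
  exact ⟨Y, hYN, (hY.of_subgroupOf hYM hM).subgroupOf hYN⟩
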